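/- arXiv:1903.12369 — 2 statements merged into one kernel-verified Lean document; each statement's English description precedes it below -/
import Mathlib

section
/- Let I be a finite set and λ : I×I×I×I → {0,1} satisfy condition (⋆). Let B be a unital C*-algebra and let {p_{x,a}}_{x,a∈I} and {q_{x,a}}_{x,a∈I} be two families of projections in B, each satisfying the game relations for λ, such that every p_{x,a} commutes with every q_{y,b}. Define Q_{k,i} := Σ_{r∈I} p_{k,r} q_{r,i}. Then for all i, j, k, l ∈ I with λ(i,j,k,l) = 0 one has Q_{k,i} Q_{l,j} = 0. -/
/-- If `lam` satisfies condition (⋆) and `p`, `q` are two commuting families of projections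
satisfying the game relations for `lam`, then the elements `Q k i = ∑ r, p k r * q r i`
satisfy `Q k i * Q l j = 0` whenever `lam i j k l = 0`. -/
theorem comultiplication_projections_orthogonal
    {I : Type*} [Fintype I] {B : Type*} [CStarAlgebra B]
    (lam : I → I → I → I → ℕ)
    (hstar : ∀ i j k l, lam i j k l = 0 → ∀ r s, lam i j r s * lam r s k l = 0)
    (p q : I → I → B)
    (hp_proj : ∀ x a, star (p x a) * p x a = p x a)
    (hp_sum : ∀ x, ∑ a, p x a = 1)
    (hp_orth : ∀ x a y b, lam a b x y = 0 → p x a * p y b = 0)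
    (hq_proj : ∀ x a, star (q x a) * q x a = q x a)
    (hq_sum : ∀ x, ∑ a, q x a = 1)
    (hq_orth : ∀ x a y b, lam a b x y = 0 → q x a * q y b = 0)
    (hcomm : ∀ x a y b, Commute (p x a) (q y b)) :
    ∀ i j k l, lam i j k l = 0 →
      (∑ r, p k r * q r i) * (∑ s, p l s * q s j) = 0 := by
  intro i j k l h0
  rw [Finset.sum_mul]
  apply Finset.sum_eq_zero
  intro r _
  rw [Finset.mul_sum]
  apply Finset.sum_eq_zero
  intro s _
  have key : p k r * q r i * (p l s * q s j) = p k r * p l s * (q r i * q s j) := by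
    rw [mul_assoc, mul_assoc, ← mul_assoc (q r i), ((hcomm l s r i).symm).eq, mul_assoc]
  rw [key]
  rcases Nat.mul_eq_zero.mp (hstar i j k l h0 r s) with h1 | h2
  · rw [hq_orth r i s j h1, mul_zero]
  · rw [hp_orth k r l s h2, zero_mul]
end

section
/- Let I be a finite set and let {p_{i,j}}_{i,j∈I} be a magic unitary in a unital C*-algebra B. In the C*-algebra I → B of B-valued functions on I with pointwise operations, the ℂ-linear span of the set { (x ↦ p_{x,j} · b) : j ∈ I, b ∈ B } is all of I → B. -/
private lemma proj_orth {B : Type*} [CStarAlgebra B] {ι : Type*} [Fintype ι]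
    (q : ι → B) (hq : ∀ i, star (q i) * q i = q i) (hsum : ∑ i, q i = 1)
    {i k : ι} (hik : i ≠ k) : q k * q i = 0 := by
  classical
  letI := CStarAlgebra.spectralOrder B
  letI := CStarAlgebra.spectralOrderedRing B
  have hsa : ∀ i, star (q i) = q i := fun i => by
    have h1 := congrArg star (hq i)
    rw [star_mul, star_star] at h1
    exact h1.symm.trans (hq i)
  have hidem : ∀ i, q i * q i = q i := fun i => by
    nth_rewrite 1 [← hsa i]; exact hq i
  have key : ∑ k ∈ Finset.univ.erase i, star (q k * q i) * (q k * q i) = 0 := by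
    have heq : ∀ k, star (q k * q i) * (q k * q i) = q i * (q k * q i) := fun k => by
      rw [star_mul, hsa, hsa, mul_assoc, ← mul_assoc (q k), hidem k]
    simp only [heq]
    rw [← Finset.mul_sum, ← Finset.sum_mul,
      Finset.sum_erase_eq_sub (Finset.mem_univ i), hsum]
    rw [sub_mul, one_mul, hidem i, sub_self, mul_zero]
  have hterm : star (q k * q i) * (q k * q i) = 0 :=
    (Finset.sum_eq_zero_iff_of_nonneg (fun j _ => star_mul_self_nonneg (q j * q i))).mp
      key k (Finset.mem_erase.mpr ⟨hik.symm, Finset.mem_univ k⟩)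
  exact (CStarRing.star_mul_self_eq_zero_iff _).mp hterm

/-- For a magic unitary `p` in a unital C*-algebra `B`, the linear span of the functions
`x ↦ p x j * b` (for `j ∈ I`, `b ∈ B`) is all of `I → B`; i.e. the associated quantum
family of maps is a quantum family of invertible maps. -/
theorem magic_unitary_span_dense
    {I : Type*} [Fintype I] {B : Type*} [CStarAlgebra B]
    (p : I → I → B)
    (hp_proj : ∀ i j, star (p i j) * p i j = p i j)
    (hp_row : ∀ i, ∑ j, p i j = 1)
    (hp_col : ∀ j, ∑ i, p i j = 1) :
    Submodule.span ℂ {f : I → B | ∃ j b, f = fun x => p x j * b} = ⊤ := by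
  classical
  have hsa : ∀ i j, star (p i j) = p i j := fun i j => by
    have h1 := congrArg star (hp_proj i j)
    rw [star_mul, star_star] at h1
    exact h1.symm.trans (hp_proj i j)
  have hidem : ∀ i j, p i j * p i j = p i j := fun i j => by
    nth_rewrite 1 [← hsa i j]; exact hp_proj i j
  have horth : ∀ j {x i : I}, x ≠ i → p x j * p i j = 0 := by
    intro j x i hxi
    exact proj_orth (fun i => p i j) (fun i => hp_proj i j) (hp_col j) hxi.symm
  rw [eq_top_iff]
  intro f _
  have hsingle : ∀ (i : I) (b : B),
      Pi.single i b ∈ Submodule.span ℂ {f : I → B | ∃ j b, f = fun x => p x j * b} := by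
    intro i b
    have : Pi.single i b = ∑ j, (fun x => p x j * (p i j * b)) := by
      funext x
      by_cases hxi : x = i
      · subst hxi
        simp only [Finset.sum_apply, Pi.single_eq_same]
        refine Eq.symm ?_
        calc ∑ j, p x j * (p x j * b) = ∑ j, (p x j * p x j) * b := by
              simp [mul_assoc]
          _ = (∑ j, p x j) * b := by
              rw [Finset.sum_mul]; congr 1; funext j; rw [hidem]
          _ = b := by rw [hp_row]; simp
      · simp only [Finset.sum_apply, Pi.single_eq_of_ne hxi]
        apply (Finset.sum_eq_zero _).symm
        intro j _
        rw [← mul_assoc, horth j hxi, zero_mul]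
    rw [this]
    exact Submodule.sum_mem _ fun j _ => Submodule.subset_span ⟨j, p i j * b, rfl⟩
  have : f = ∑ i, Pi.single i (f i) := by
    funext x; simp [Finset.sum_apply, Pi.single_apply]
  rw [this]
  exact Submodule.sum_mem _ fun i _ => hsingle i (f i)
end
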